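/- Let r>0, let m_1 ≠ m_2 be integers ≥1, set c_m = -(π/r)^2·((2m-1)/4)^2, ω_m = ((2m-1)π)/(4r), e_m(s) = 2·cos(ω_m(s+r)), and let α_0 = -(c_{m_1}+c_{m_2}), β_0 = c_{m_1}·c_{m_2} be the intersection point of the rays l_{m_1} and l_{m_2}. Then for every continuous real function y on [-r,r] there exists a unique four times continuously differentiable function x on [-r,r] satisfying the boundary conditions x'(-r) = x'''(-r) = 0, x(r) = x''(r) = 0 and x''''(s) + α_0·x''(s) + β_0·x(s) - Σ_{i=1}^{2} ((1/2r)∫_{-r}^{r} x(t)·e_{m_i}(t) dt)·e_{m_i}(s) = y(s) for all s ∈ [-r,r]. (Bijectivity of the operator G'_x(0,0,α_0,β_0) used in the Lyapunov–Schmidt reduction.) -/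

import Mathlib

/-!
At the intersection point `(α₀, β₀)` the operator factors as
`x'''' + α₀ x'' + β₀ x = (D² + ω₁²)(D² + ω₂²) x`, and `cos (ω (s + r))` with `cos (2 ω r) = 0`
is the mode of `D² + ω²` compatible with the boundary conditions. Integrating by parts twice,
`(D² + ω²) f` is orthogonal to this mode whenever `f (r) = f' (-r) = 0`; conversely, variation of
constants solves `(D² + ω²) f = h` under these conditions whenever `h` is orthogonal to the mode,
and the component of `f` along the mode is free. So the fourth-order boundary problem
`L x = g` is solvable exactly for `g ⊥ e₁, e₂`, with solutions `x₀ + span (e₁, e₂)`; the term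
`Σ ⟨x, eᵢ⟩ eᵢ` turns this into a bijection, the components of `y` along `eᵢ` fixing the free
components of `x`. Uniqueness comes from the same orthogonality and from conservation of the
energy `f'² + ω² f²` for `f'' + ω² f = 0`.
-/

open Real Set intervalIntegral

theorem contDiff_succ_of_hasDerivAt {n : ℕ} {f f' : ℝ → ℝ} (h : ∀ s, HasDerivAt f (f' s) s)
    (h' : ContDiff ℝ n f') : ContDiff ℝ (n + 1) f := by
  have hd : deriv f = f' := funext fun s => (h s).deriv
  exact contDiff_succ_iff_deriv.2 ⟨fun s => (h s).differentiableAt, by simp, hd ▸ h'⟩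

theorem contDiff_four_of_hasDerivAt {f f₁ f₂ f₃ f₄ : ℝ → ℝ} (h₁ : ∀ s, HasDerivAt f (f₁ s) s)
    (h₂ : ∀ s, HasDerivAt f₁ (f₂ s) s) (h₃ : ∀ s, HasDerivAt f₂ (f₃ s) s)
    (h₄ : ∀ s, HasDerivAt f₃ (f₄ s) s) (h₅ : Continuous f₄) :
    ContDiff ℝ 4 f ∧ iteratedDeriv 1 f = f₁ ∧ iteratedDeriv 2 f = f₂ ∧
      iteratedDeriv 3 f = f₃ ∧ iteratedDeriv 4 f = f₄ := by
  have e₁ : iteratedDeriv 1 f = f₁ := by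
    rw [iteratedDeriv_one]; exact funext fun s => (h₁ s).deriv
  have e₂ : iteratedDeriv 2 f = f₂ := by
    rw [iteratedDeriv_succ, e₁]; exact funext fun s => (h₂ s).deriv
  have e₃ : iteratedDeriv 3 f = f₃ := by
    rw [iteratedDeriv_succ, e₂]; exact funext fun s => (h₃ s).deriv
  have e₄ : iteratedDeriv 4 f = f₄ := by
    rw [iteratedDeriv_succ, e₃]; exact funext fun s => (h₄ s).deriv
  refine ⟨?_, e₁, e₂, e₃, e₄⟩
  have c₄ : ContDiff ℝ (0 : ℕ) f₄ := contDiff_zero.2 h₅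
  exact contDiff_succ_of_hasDerivAt h₁ <| contDiff_succ_of_hasDerivAt h₂ <|
    contDiff_succ_of_hasDerivAt h₃ <| contDiff_succ_of_hasDerivAt h₄ c₄

theorem hasDerivAt_iteratedDeriv {n k : ℕ} {f : ℝ → ℝ} (hf : ContDiff ℝ n f) (hk : k < n)
    (s : ℝ) : HasDerivAt (iteratedDeriv k f) (iteratedDeriv (k + 1) f s) s := by
  rw [iteratedDeriv_succ]
  exact (hf.differentiable_iteratedDeriv k (by exact_mod_cast hk) s).hasDerivAt

theorem hasDerivAt_iteratedDeriv_of_contDiff_four {x : ℝ → ℝ} (hx : ContDiff ℝ 4 x) :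
    (∀ s, HasDerivAt x (iteratedDeriv 1 x s) s) ∧
      (∀ s, HasDerivAt (iteratedDeriv 1 x) (iteratedDeriv 2 x s) s) ∧
      (∀ s, HasDerivAt (iteratedDeriv 2 x) (iteratedDeriv 3 x s) s) ∧
      (∀ s, HasDerivAt (iteratedDeriv 3 x) (iteratedDeriv 4 x s) s) :=
  ⟨by simpa using hasDerivAt_iteratedDeriv hx (k := 0) (by norm_num),
    hasDerivAt_iteratedDeriv hx (k := 1) (by norm_num),
    hasDerivAt_iteratedDeriv hx (k := 2) (by norm_num),
    hasDerivAt_iteratedDeriv hx (k := 3) (by norm_num)⟩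

theorem iteratedDeriv_sub_of_contDiff {n k : ℕ} {f g : ℝ → ℝ} (hf : ContDiff ℝ n f)
    (hg : ContDiff ℝ n g) (hk : k ≤ n) (s : ℝ) :
    iteratedDeriv k (f - g) s = iteratedDeriv k f s - iteratedDeriv k g s :=
  iteratedDeriv_sub (hf.of_le (by exact_mod_cast hk)).contDiffAt
    (hg.of_le (by exact_mod_cast hk)).contDiffAt

theorem eqOn_zero_of_hasDerivAt_sq_add {a b ω : ℝ} (hω : ω ≠ 0) {f f' : ℝ → ℝ}
    (hf : ∀ s, HasDerivAt f (f' s) s) (hf' : ∀ s ∈ Icc a b, HasDerivAt f' (-(ω ^ 2 * f s)) s)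
    (h₀ : f a = 0) (h₁ : f' a = 0) : EqOn f 0 (Icc a b) := by
  -- the energy `f'² + ω² f²` is conserved
  have hE : ∀ s ∈ Icc a b, HasDerivAt (fun t => f' t ^ 2 + ω ^ 2 * f t ^ 2) 0 s := fun s hs => by
    refine (((hf' s hs).pow 2).add (((hf s).pow 2).const_mul _)).congr_deriv ?_
    ring
  have hconst := constant_of_has_deriv_right_zero
    (fun s hs => (hE s hs).continuousAt.continuousWithinAt)
    (fun s hs => (hE s (Ico_subset_Icc_self hs)).hasDerivWithinAt)
  intro s hs
  have h := hconst s hs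
  simp only [h₀, h₁] at h
  have : ω ^ 2 * f s ^ 2 = 0 := by nlinarith [sq_nonneg (f' s), sq_nonneg (ω * f s)]
  simpa [hω] using this

section Modes

variable {r ω ν : ℝ}

theorem hasDerivAt_cos_mul_add (r ω s : ℝ) :
    HasDerivAt (fun t => cos (ω * (t + r))) (-(ω * sin (ω * (s + r)))) s := by
  simpa [mul_comm] using (((hasDerivAt_id s).add_const r).const_mul ω).cos

theorem hasDerivAt_sin_mul_add (r ω s : ℝ) :
    HasDerivAt (fun t => sin (ω * (t + r))) (ω * cos (ω * (s + r))) s := by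
  simpa [mul_comm] using (((hasDerivAt_id s).add_const r).const_mul ω).sin

theorem ne_zero_of_cos_mul_eq_zero (hω : cos (ω * (2 * r)) = 0) : ω ≠ 0 := by
  rintro rfl
  simp at hω

theorem integral_mul_cos_eq_zero_of_hasDerivAt (hω : cos (ω * (2 * r)) = 0)
    {f f' f'' : ℝ → ℝ} (hf : ∀ s, HasDerivAt f (f' s) s) (hf' : ∀ s, HasDerivAt f' (f'' s) s)
    (hf'' : Continuous f'') (h₁ : f' (-r) = 0) (h₀ : f r = 0) :
    ∫ t in (-r)..r, (f'' t + ω ^ 2 * f t) * cos (ω * (t + r)) = 0 := by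
  have hF : ∀ s, HasDerivAt (fun t => f' t * cos (ω * (t + r)) + ω * (f t * sin (ω * (t + r))))
      ((f'' s + ω ^ 2 * f s) * cos (ω * (s + r))) s := fun s => by
    refine (((hf' s).mul (hasDerivAt_cos_mul_add r ω s)).add
      (((hf s).mul (hasDerivAt_sin_mul_add r ω s)).const_mul ω)).congr_deriv ?_
    ring
  have hcont : Continuous fun t => (f'' t + ω ^ 2 * f t) * cos (ω * (t + r)) := by
    have := continuous_iff_continuousAt.2 fun s => (hf s).continuousAt
    fun_prop
  rw [integral_eq_sub_of_hasDerivAt (fun s _ => hF s) (hcont.intervalIntegrable _ _)]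
  simp [h₀, h₁, ← two_mul, hω]

theorem integral_mul_cos_eq_of_hasDerivAt_sq_add (hω : cos (ω * (2 * r)) = 0)
    {f f' g : ℝ → ℝ} (hf : ∀ s, HasDerivAt f (f' s) s)
    (hf' : ∀ s, HasDerivAt f' (g s - ν ^ 2 * f s) s) (hg : Continuous g) (h₁ : f' (-r) = 0)
    (h₀ : f r = 0) :
    ∫ t in (-r)..r, g t * cos (ω * (t + r))
      = (ν ^ 2 - ω ^ 2) * ∫ t in (-r)..r, f t * cos (ω * (t + r)) := by
  have hfc := continuous_iff_continuousAt.2 fun s => (hf s).continuousAt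
  have h := integral_mul_cos_eq_zero_of_hasDerivAt hω hf hf' (by fun_prop) h₁ h₀
  have e : ∀ t, (g t - ν ^ 2 * f t + ω ^ 2 * f t) * cos (ω * (t + r))
      = g t * cos (ω * (t + r)) - (ν ^ 2 - ω ^ 2) * (f t * cos (ω * (t + r))) :=
    fun t => by ring
  simp only [e] at h
  rwa [integral_sub ((by fun_prop : Continuous _).intervalIntegrable _ _)
    ((by fun_prop : Continuous _).intervalIntegrable _ _), integral_const_mul,
    sub_eq_zero] at h

theorem integral_cos_mul_add_sq (hω : cos (ω * (2 * r)) = 0) :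
    ∫ t in (-r)..r, cos (ω * (t + r)) ^ 2 = r := by
  have hω₀ := ne_zero_of_cos_mul_eq_zero hω
  have := integral_comp_mul_add (fun u => cos u ^ 2) hω₀ (ω * r) (a := -r) (b := r)
  simp only [mul_add] at this ⊢
  rw [this, integral_cos_sq, show ω * r + ω * r = ω * (2 * r) by ring, hω]
  simp only [zero_mul, mul_neg, neg_add_cancel, cos_zero, sin_zero, mul_zero, sub_self, zero_add,
    sub_zero, smul_eq_mul]
  field_simp

theorem integral_cos_mul_cos_eq_zero (hω : cos (ω * (2 * r)) = 0)
    (hν : cos (ν * (2 * r)) = 0) (hων : ω ^ 2 ≠ ν ^ 2) :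
    ∫ t in (-r)..r, cos (ν * (t + r)) * cos (ω * (t + r)) = 0 := by
  have h := integral_mul_cos_eq_zero_of_hasDerivAt hω (hasDerivAt_cos_mul_add r ν)
    (fun s => ((hasDerivAt_sin_mul_add r ν s).const_mul ν).neg) (by fun_prop)
    (by simp) (by simp [← two_mul, hν])
  have e : ∀ t, (-(ν * (ν * cos (ν * (t + r)))) + ω ^ 2 * cos (ν * (t + r))) * cos (ω * (t + r))
      = (ω ^ 2 - ν ^ 2) * (cos (ν * (t + r)) * cos (ω * (t + r))) := fun t => by ring
  simp only [e, integral_const_mul, mul_eq_zero, sub_eq_zero] at h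
  exact h.resolve_left hων

theorem integral_mul_cos_add_mul_cos_mul_cos (hω : cos (ω * (2 * r)) = 0)
    (hν : cos (ν * (2 * r)) = 0) (hων : ω ^ 2 ≠ ν ^ 2) (a b : ℝ) :
    ∫ t in (-r)..r, (a * cos (ω * (t + r)) + b * cos (ν * (t + r))) * cos (ω * (t + r))
      = a * r := by
  have e : ∀ t, (a * cos (ω * (t + r)) + b * cos (ν * (t + r))) * cos (ω * (t + r))
      = a * cos (ω * (t + r)) ^ 2 + b * (cos (ν * (t + r)) * cos (ω * (t + r))) :=
    fun t => by ring
  simp only [e]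
  rw [integral_add ((by fun_prop : Continuous _).intervalIntegrable _ _)
    ((by fun_prop : Continuous _).intervalIntegrable _ _), integral_const_mul,
    integral_const_mul, integral_cos_mul_add_sq hω, integral_cos_mul_cos_eq_zero hω hν hων,
    mul_zero, add_zero]

theorem exists_hasDerivAt_sq_add_eq_of_integral_mul_cos_eq_zero (hω : cos (ω * (2 * r)) = 0)
    {h : ℝ → ℝ} (hh : Continuous h) (horth : ∫ t in (-r)..r, h t * cos (ω * (t + r)) = 0) :
    ∃ f f' : ℝ → ℝ, (∀ s, HasDerivAt f (f' s) s) ∧ (∀ s, HasDerivAt f' (h s - ω ^ 2 * f s) s) ∧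
      f' (-r) = 0 ∧ f r = 0 := by
  have hω₀ := ne_zero_of_cos_mul_eq_zero hω
  set C := fun s => ∫ t in (-r)..s, h t * cos (ω * (t + r))
  set S := fun s => ∫ t in (-r)..s, h t * sin (ω * (t + r))
  have hC : ∀ s, HasDerivAt C (h s * cos (ω * (s + r))) s := fun s =>
    ((by fun_prop : Continuous fun t => h t * cos (ω * (t + r))).integral_hasStrictDerivAt
      (-r) s).hasDerivAt
  have hS : ∀ s, HasDerivAt S (h s * sin (ω * (s + r))) s := fun s =>
    ((by fun_prop : Continuous fun t => h t * sin (ω * (t + r))).integral_hasStrictDerivAt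
      (-r) s).hasDerivAt
  -- variation of constants; the value at `r` vanishes because `h` is orthogonal to the mode
  refine ⟨fun s => (sin (ω * (s + r)) * C s - cos (ω * (s + r)) * S s) / ω,
    fun s => cos (ω * (s + r)) * C s + sin (ω * (s + r)) * S s,
    fun s => ?_, fun s => ?_, by simp [C, S], by simp [C, ← two_mul, hω, horth]⟩
  · refine ((((hasDerivAt_sin_mul_add r ω s).mul (hC s)).sub
      ((hasDerivAt_cos_mul_add r ω s).mul (hS s))).div_const ω).congr_deriv ?_
    field_simp
    ring
  · refine (((hasDerivAt_cos_mul_add r ω s).mul (hC s)).add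
      ((hasDerivAt_sin_mul_add r ω s).mul (hS s))).congr_deriv ?_
    field_simp
    linear_combination h s * sin_sq_add_cos_sq (ω * (s + r))

theorem exists_hasDerivAt_sq_add_eq (hω : cos (ω * (2 * r)) = 0) {h : ℝ → ℝ}
    (hh : Continuous h) (horth : ∫ t in (-r)..r, h t * cos (ω * (t + r)) = 0) (c : ℝ) :
    ∃ f f' : ℝ → ℝ, (∀ s, HasDerivAt f (f' s) s) ∧ (∀ s, HasDerivAt f' (h s - ω ^ 2 * f s) s) ∧
      f' (-r) = 0 ∧ f r = 0 ∧ ∫ t in (-r)..r, f t * cos (ω * (t + r)) = c := by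
  obtain ⟨f, f', hf, hf', h₁, h₀⟩ :=
    exists_hasDerivAt_sq_add_eq_of_integral_mul_cos_eq_zero hω hh horth
  have hr : r ≠ 0 := by rintro rfl; simp at hω
  set a := (c - ∫ t in (-r)..r, f t * cos (ω * (t + r))) / r
  refine ⟨fun s => f s + a * cos (ω * (s + r)), fun s => f' s + a * -(ω * sin (ω * (s + r))),
    fun s => (hf s).add ((hasDerivAt_cos_mul_add r ω s).const_mul a),
    fun s => ((hf' s).add (((hasDerivAt_sin_mul_add r ω s).const_mul ω).neg.const_mul
      a)).congr_deriv (by ring), by simp [h₁], by simp [h₀, ← two_mul, hω], ?_⟩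
  have := continuous_iff_continuousAt.2 fun s => (hf s).continuousAt
  have e : ∀ t, (f t + a * cos (ω * (t + r))) * cos (ω * (t + r))
      = f t * cos (ω * (t + r)) + a * cos (ω * (t + r)) ^ 2 := fun t => by ring
  simp only [e]
  rw [integral_add ((by fun_prop : Continuous _).intervalIntegrable _ _)
    ((by fun_prop : Continuous _).intervalIntegrable _ _), integral_const_mul,
    integral_cos_mul_add_sq hω, div_mul_cancel₀ _ hr]
  ring

theorem eqOn_zero_of_hasDerivAt_of_integral_mul_cos_eq_zero (hr : 0 ≤ r)
    (hω : cos (ω * (2 * r)) = 0) {f f' : ℝ → ℝ} (hf : ∀ s, HasDerivAt f (f' s) s)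
    (hf' : ∀ s ∈ Icc (-r) r, HasDerivAt f' (-(ω ^ 2 * f s)) s) (h₁ : f' (-r) = 0)
    (horth : ∫ t in (-r)..r, f t * cos (ω * (t + r)) = 0) : EqOn f 0 (Icc (-r) r) := by
  set c := f (-r)
  have hmode : EqOn f (fun s => c * cos (ω * (s + r))) (Icc (-r) r) := by
    have h := eqOn_zero_of_hasDerivAt_sq_add (ne_zero_of_cos_mul_eq_zero hω)
      (fun s => (hf s).fun_sub ((hasDerivAt_cos_mul_add r ω s).const_mul c))
      (fun s hs => ((hf' s hs).fun_sub (((hasDerivAt_sin_mul_add r ω s).const_mul ω).neg.const_mul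
        c)).congr_deriv (by ring))
      (by simp [c]) (by simp [h₁])
    exact fun s hs => sub_eq_zero.1 (h hs)
  have hc : c * r = 0 := by
    rw [← horth]
    nth_rw 1 [← integral_cos_mul_add_sq hω]
    rw [← integral_const_mul]
    refine integral_congr fun s hs => ?_
    rw [uIcc_of_le (by linarith)] at hs
    simp only [hmode hs]
    ring
  have hr₀ : r ≠ 0 := by rintro rfl; simp at hω
  intro s hs
  simp [hmode hs, (mul_eq_zero.1 hc).resolve_right hr₀]

end Modes

noncomputable def fourthOrderOp (α β : ℝ) (x : ℝ → ℝ) (s : ℝ) : ℝ :=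
  iteratedDeriv 4 x s + α * iteratedDeriv 2 x s + β * x s

def HasBoundaryConditions (r : ℝ) (x : ℝ → ℝ) : Prop :=
  iteratedDeriv 1 x (-r) = 0 ∧ iteratedDeriv 3 x (-r) = 0 ∧ x r = 0 ∧ iteratedDeriv 2 x r = 0

noncomputable def intervalInner (r : ℝ) (f g : ℝ → ℝ) : ℝ :=
  (1 / (2 * r)) * ∫ t in (-r)..r, f t * g t

-- The operator `G'_x(0, 0, α, β)` of the Lyapunov–Schmidt reduction, for the modes `e₁`, `e₂`.
noncomputable def linearizedOp (r α β : ℝ) (e₁ e₂ x : ℝ → ℝ) (s : ℝ) : ℝ :=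
  fourthOrderOp α β x s - intervalInner r x e₁ * e₁ s - intervalInner r x e₂ * e₂ s

section FourthOrder

variable {r ω ν α β : ℝ} {x : ℝ → ℝ}

theorem HasBoundaryConditions.sub {x₁ x₂ : ℝ → ℝ} (hx₁ : ContDiff ℝ 4 x₁)
    (hx₂ : ContDiff ℝ 4 x₂) (h₁ : HasBoundaryConditions r x₁) (h₂ : HasBoundaryConditions r x₂) :
    HasBoundaryConditions r (x₁ - x₂) := by
  obtain ⟨h₁₁, h₁₃, h₁₀, h₁₂⟩ := h₁
  obtain ⟨h₂₁, h₂₃, h₂₀, h₂₂⟩ := h₂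
  refine ⟨?_, ?_, by simp [h₁₀, h₂₀], ?_⟩ <;>
    rw [iteratedDeriv_sub_of_contDiff hx₁ hx₂ (by norm_num)] <;> simp [*]

-- `fourthOrderOp α β = (D² + ω²)(D² + ν²)`, and `x'' + ν² x` inherits the boundary conditions.
theorem integral_fourthOrderOp_mul_cos_eq_zero (hω : cos (ω * (2 * r)) = 0)
    (hα : α = ω ^ 2 + ν ^ 2) (hβ : β = ω ^ 2 * ν ^ 2) (hx : ContDiff ℝ 4 x)
    (hbc : HasBoundaryConditions r x) :
    ∫ t in (-r)..r, fourthOrderOp α β x t * cos (ω * (t + r)) = 0 := by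
  obtain ⟨h₁, h₃, h₀, h₂⟩ := hbc
  obtain ⟨d₀, d₁, d₂, d₃⟩ := hasDerivAt_iteratedDeriv_of_contDiff_four hx
  have := hx.continuous_iteratedDeriv 4 le_rfl
  have := hx.continuous_iteratedDeriv 2 (by norm_num)
  have h := integral_mul_cos_eq_zero_of_hasDerivAt hω
    (fun s => (d₂ s).fun_add ((d₀ s).const_mul (ν ^ 2)))
    (fun s => (d₃ s).fun_add ((d₁ s).const_mul (ν ^ 2)))
    (by fun_prop) (by simp [h₁, h₃]) (by simp [h₀, h₂])
  rw [← h]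
  congr 1 with t
  simp only [fourthOrderOp, hα, hβ]
  ring

theorem coeff_eq_zero_of_fourthOrderOp_eq (hr : 0 < r) (hω : cos (ω * (2 * r)) = 0)
    (hν : cos (ν * (2 * r)) = 0) (hων : ω ^ 2 ≠ ν ^ 2) (hα : α = ω ^ 2 + ν ^ 2)
    (hβ : β = ω ^ 2 * ν ^ 2) (hx : ContDiff ℝ 4 x) (hbc : HasBoundaryConditions r x) {a b : ℝ}
    (hLx : ∀ s ∈ Icc (-r) r,
      fourthOrderOp α β x s = a * cos (ω * (s + r)) + b * cos (ν * (s + r))) : a = 0 := by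
  have h := integral_fourthOrderOp_mul_cos_eq_zero hω hα hβ hx hbc
  rw [integral_congr fun s hs => congrArg (· * cos (ω * (s + r)))
      (hLx s (by rwa [uIcc_of_le (by linarith)] at hs)),
    integral_mul_cos_add_mul_cos_mul_cos hω hν hων] at h
  exact (mul_eq_zero.1 h).resolve_right hr.ne'

theorem eqOn_zero_of_fourthOrderOp_eq_zero (hr : 0 ≤ r) (hω : cos (ω * (2 * r)) = 0)
    (hν : cos (ν * (2 * r)) = 0) (hα : α = ω ^ 2 + ν ^ 2) (hβ : β = ω ^ 2 * ν ^ 2)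
    (hx : ContDiff ℝ 4 x) (hbc : HasBoundaryConditions r x)
    (hLx : ∀ s ∈ Icc (-r) r, fourthOrderOp α β x s = 0)
    (hxω : ∫ t in (-r)..r, x t * cos (ω * (t + r)) = 0)
    (hxν : ∫ t in (-r)..r, x t * cos (ν * (t + r)) = 0) : EqOn x 0 (Icc (-r) r) := by
  obtain ⟨h₁, h₃, h₀, -⟩ := hbc
  obtain ⟨d₀, d₁, d₂, d₃⟩ := hasDerivAt_iteratedDeriv_of_contDiff_four hx
  have hw : EqOn (fun s => iteratedDeriv 2 x s + ν ^ 2 * x s) 0 (Icc (-r) r) := by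
    have := hx.continuous_iteratedDeriv 2 (by norm_num)
    have := hx.continuous
    refine eqOn_zero_of_hasDerivAt_of_integral_mul_cos_eq_zero hr hω
      (fun s => (d₂ s).fun_add ((d₀ s).const_mul (ν ^ 2)))
      (fun s hs => ((d₃ s).fun_add ((d₁ s).const_mul _)).congr_deriv ?_)
      (by simp [h₁, h₃]) ?_
    · have := hLx s hs
      simp only [fourthOrderOp, hα, hβ] at this
      linear_combination this
    · rw [integral_mul_cos_eq_of_hasDerivAt_sq_add hω d₀ (fun s => (d₁ s).congr_deriv (by ring))
        (by fun_prop) h₁ h₀, hxω, mul_zero]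
  refine eqOn_zero_of_hasDerivAt_of_integral_mul_cos_eq_zero hr hν d₀
    (fun s hs => (d₁ s).congr_deriv ?_) h₁ hxν
  have := hw hs
  simp only [Pi.zero_apply] at this
  linear_combination this

theorem contDiff_four_and_fourthOrderOp_eq_of_factorization (hα : α = ω ^ 2 + ν ^ 2)
    (hβ : β = ω ^ 2 * ν ^ 2) {x' w w' g : ℝ → ℝ} (hx : ∀ s, HasDerivAt x (x' s) s)
    (hx' : ∀ s, HasDerivAt x' (w s - ω ^ 2 * x s) s) (hw : ∀ s, HasDerivAt w (w' s) s)
    (hw' : ∀ s, HasDerivAt w' (g s - ν ^ 2 * w s) s) (hg : Continuous g)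
    (hx₁ : x' (-r) = 0) (hx₀ : x r = 0) (hw₁ : w' (-r) = 0) (hw₀ : w r = 0) :
    ContDiff ℝ 4 x ∧ HasBoundaryConditions r x ∧ ∀ s, fourthOrderOp α β x s = g s := by
  have hxc := continuous_iff_continuousAt.2 fun s => (hx s).continuousAt
  have hwc := continuous_iff_continuousAt.2 fun s => (hw s).continuousAt
  obtain ⟨hC, e₁, e₂, e₃, e₄⟩ := contDiff_four_of_hasDerivAt hx hx'
    (fun s => (hw s).fun_sub ((hx s).const_mul (ω ^ 2)))
    (fun s => (hw' s).fun_sub ((hx' s).const_mul (ω ^ 2))) (by fun_prop)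
  refine ⟨hC, ⟨?_, ?_, hx₀, ?_⟩, fun s => ?_⟩
  · simp [e₁, hx₁]
  · simp [e₃, hx₁, hw₁]
  · simp [e₂, hx₀, hw₀]
  · simp only [fourthOrderOp, e₂, e₄, hα, hβ]
    ring

theorem intervalInner_two_mul_cos (r ω : ℝ) (x : ℝ → ℝ) :
    intervalInner r x (fun s => 2 * cos (ω * (s + r)))
      = (∫ t in (-r)..r, x t * cos (ω * (t + r))) / r := by
  simp only [intervalInner, mul_left_comm _ (2 : ℝ), integral_const_mul]
  ring

theorem linearizedOp_sub {e₁ e₂ x₁ x₂ : ℝ → ℝ} (he₁ : Continuous e₁) (he₂ : Continuous e₂)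
    (hx₁ : ContDiff ℝ 4 x₁) (hx₂ : ContDiff ℝ 4 x₂) (s : ℝ) :
    linearizedOp r α β e₁ e₂ (x₁ - x₂) s
      = linearizedOp r α β e₁ e₂ x₁ s - linearizedOp r α β e₁ e₂ x₂ s := by
  have := hx₁.continuous
  have := hx₂.continuous
  have hinner : ∀ e : ℝ → ℝ, Continuous e →
      intervalInner r (x₁ - x₂) e = intervalInner r x₁ e - intervalInner r x₂ e := fun e he => by
    simp only [intervalInner, Pi.sub_apply, sub_mul]
    rw [integral_sub ((by fun_prop : Continuous _).intervalIntegrable _ _)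
      ((by fun_prop : Continuous _).intervalIntegrable _ _)]
    ring
  simp only [linearizedOp, fourthOrderOp, hinner e₁ he₁, hinner e₂ he₂,
    iteratedDeriv_sub_of_contDiff hx₁ hx₂ (le_refl 4),
    iteratedDeriv_sub_of_contDiff hx₁ hx₂ (by norm_num : 2 ≤ 4), Pi.sub_apply]
  ring

theorem eqOn_zero_of_linearizedOp_eq_zero (hr : 0 < r) (hω : cos (ω * (2 * r)) = 0)
    (hν : cos (ν * (2 * r)) = 0) (hων : ω ^ 2 ≠ ν ^ 2) (hα : α = ω ^ 2 + ν ^ 2)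
    (hβ : β = ω ^ 2 * ν ^ 2) (hx : ContDiff ℝ 4 x) (hbc : HasBoundaryConditions r x)
    (hGx : ∀ s ∈ Icc (-r) r, linearizedOp r α β (fun s => 2 * cos (ω * (s + r)))
      (fun s => 2 * cos (ν * (s + r))) x s = 0) :
    EqOn x 0 (Icc (-r) r) := by
  set Iω := ∫ t in (-r)..r, x t * cos (ω * (t + r))
  set Iν := ∫ t in (-r)..r, x t * cos (ν * (t + r))
  have hLx : ∀ s ∈ Icc (-r) r, fourthOrderOp α β x s
      = 2 * Iω / r * cos (ω * (s + r)) + 2 * Iν / r * cos (ν * (s + r)) := fun s hs => by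
    have := hGx s hs
    simp only [linearizedOp, intervalInner_two_mul_cos] at this
    linear_combination this
  have hIω : 2 * Iω / r = 0 := coeff_eq_zero_of_fourthOrderOp_eq hr hω hν hων hα hβ hx hbc hLx
  have hIν : 2 * Iν / r = 0 := coeff_eq_zero_of_fourthOrderOp_eq hr hν hω hων.symm
    (hα.trans (add_comm _ _)) (hβ.trans (mul_comm _ _)) hx hbc
    (a := 2 * Iν / r) (b := 2 * Iω / r) fun s hs => by rw [hLx s hs]; ring
  refine eqOn_zero_of_fourthOrderOp_eq_zero hr.le hω hν hα hβ hx hbc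
    (fun s hs => by simp [hLx s hs, hIω, hIν]) ?_ ?_
  · simpa [hr.ne'] using hIω
  · simpa [hr.ne'] using hIν

theorem eqOn_of_linearizedOp_eq (hr : 0 < r) (hω : cos (ω * (2 * r)) = 0)
    (hν : cos (ν * (2 * r)) = 0) (hων : ω ^ 2 ≠ ν ^ 2) (hα : α = ω ^ 2 + ν ^ 2)
    (hβ : β = ω ^ 2 * ν ^ 2) {x₁ x₂ : ℝ → ℝ} (hx₁ : ContDiff ℝ 4 x₁) (hx₂ : ContDiff ℝ 4 x₂)
    (hbc₁ : HasBoundaryConditions r x₁) (hbc₂ : HasBoundaryConditions r x₂)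
    (heq : ∀ s ∈ Icc (-r) r,
      linearizedOp r α β (fun s => 2 * cos (ω * (s + r))) (fun s => 2 * cos (ν * (s + r))) x₁ s
        = linearizedOp r α β (fun s => 2 * cos (ω * (s + r)))
          (fun s => 2 * cos (ν * (s + r))) x₂ s) :
    EqOn x₁ x₂ (Icc (-r) r) := by
  have hx : ContDiff ℝ 4 (x₁ - x₂) := hx₁.sub hx₂
  have h := eqOn_zero_of_linearizedOp_eq_zero hr hω hν hων hα hβ hx
    (hbc₁.sub hx₁ hx₂ hbc₂) fun s hs => by
      rw [linearizedOp_sub (by fun_prop) (by fun_prop) hx₁ hx₂, heq s hs, sub_self]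
  exact fun s hs => sub_eq_zero.1 (h hs)

theorem exists_linearizedOp_eq (hr : 0 < r) (hω : cos (ω * (2 * r)) = 0)
    (hν : cos (ν * (2 * r)) = 0) (hων : ω ^ 2 ≠ ν ^ 2) (hα : α = ω ^ 2 + ν ^ 2)
    (hβ : β = ω ^ 2 * ν ^ 2) {y : ℝ → ℝ} (hy : Continuous y) :
    ∃ x, ContDiff ℝ 4 x ∧ HasBoundaryConditions r x ∧ ∀ s, linearizedOp r α β
      (fun s => 2 * cos (ω * (s + r))) (fun s => 2 * cos (ν * (s + r))) x s = y s := by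
  set Pω := ∫ t in (-r)..r, y t * cos (ω * (t + r))
  set Pν := ∫ t in (-r)..r, y t * cos (ν * (t + r))
  set g := fun s => y s - (Pω / r * cos (ω * (s + r)) + Pν / r * cos (ν * (s + r)))
  have hg : Continuous g := by fun_prop
  have hgω : ∫ t in (-r)..r, g t * cos (ω * (t + r)) = 0 := by
    simp only [g, sub_mul]
    rw [integral_sub ((by fun_prop : Continuous _).intervalIntegrable _ _)
      ((by fun_prop : Continuous _).intervalIntegrable _ _),
      integral_mul_cos_add_mul_cos_mul_cos hω hν hων, div_mul_cancel₀ _ hr.ne', sub_self]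
  have hgν : ∫ t in (-r)..r, g t * cos (ν * (t + r)) = 0 := by
    simp only [g, sub_mul, add_comm (Pω / r * _)]
    rw [integral_sub ((by fun_prop : Continuous _).intervalIntegrable _ _)
      ((by fun_prop : Continuous _).intervalIntegrable _ _),
      integral_mul_cos_add_mul_cos_mul_cos hν hω hων.symm, div_mul_cancel₀ _ hr.ne', sub_self]
  -- `x` solves `(D² + ω²) x = w`, `(D² + ν²) w = g`, its free mode components chosen so that
  -- `Σ ⟨x, eᵢ⟩ eᵢ` restores the mode components removed from `y`
  obtain ⟨w, w', hw, hw', hw₁, hw₀, hwν⟩ :=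
    exists_hasDerivAt_sq_add_eq hν hg hgν ((ω ^ 2 - ν ^ 2) * -(Pν / 2))
  have hwc := continuous_iff_continuousAt.2 fun s => (hw s).continuousAt
  have hwω : ∫ t in (-r)..r, w t * cos (ω * (t + r)) = 0 := by
    have := integral_mul_cos_eq_of_hasDerivAt_sq_add hω hw hw' hg hw₁ hw₀
    rw [hgω] at this
    exact (mul_eq_zero.1 this.symm).resolve_left (sub_ne_zero.2 hων.symm)
  obtain ⟨x, x', hx, hx', hx₁, hx₀, hxω⟩ := exists_hasDerivAt_sq_add_eq hω hwc hwω (-(Pω / 2))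
  have hxν : ∫ t in (-r)..r, x t * cos (ν * (t + r)) = -(Pν / 2) := by
    have := integral_mul_cos_eq_of_hasDerivAt_sq_add hν hx hx' hwc hx₁ hx₀
    rw [hwν] at this
    exact (mul_left_cancel₀ (sub_ne_zero.2 hων) this).symm
  obtain ⟨hC, hbc, hL⟩ :=
    contDiff_four_and_fourthOrderOp_eq_of_factorization hα hβ hx hx' hw hw' hg hx₁ hx₀ hw₁ hw₀
  refine ⟨x, hC, hbc, fun s => ?_⟩
  simp only [linearizedOp, hL, intervalInner_two_mul_cos, hxω, hxν, g]
  field_simp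
  ring

end FourthOrder

theorem cos_odd_mul_pi_div_mul (m : ℕ) {r : ℝ} (hr : r ≠ 0) :
    cos ((2 * (m : ℝ) - 1) * π / (4 * r) * (2 * r)) = 0 := by
  rw [show (2 * (m : ℝ) - 1) * π / (4 * r) * (2 * r) = m * π - π / 2 by field_simp; ring,
    cos_sub_pi_div_two, sin_nat_mul_pi]

theorem sq_odd_mul_pi_div_ne {m₁ m₂ : ℕ} (hm₁ : 1 ≤ m₁) (hm₂ : 1 ≤ m₂) (hne : m₁ ≠ m₂) {r : ℝ}
    (hr : 0 < r) :
    ((2 * (m₁ : ℝ) - 1) * π / (4 * r)) ^ 2 ≠ ((2 * (m₂ : ℝ) - 1) * π / (4 * r)) ^ 2 := by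
  have hpos : ∀ m : ℕ, 1 ≤ m → 0 ≤ (2 * (m : ℝ) - 1) * π / (4 * r) := fun m hm => by
    have : (1 : ℝ) ≤ m := by exact_mod_cast hm
    exact div_nonneg (mul_nonneg (by linarith) pi_pos.le) (by positivity)
  rw [Ne, sq_eq_sq₀ (hpos m₁ hm₁) (hpos m₂ hm₂)]
  intro h
  field_simp at h
  exact hne (by exact_mod_cast (by linarith : (m₁ : ℝ) = m₂))

/-- At an intersection point `(α₀,β₀)` of two rays, the operator
`x ↦ x'''' + α₀x'' + β₀x - Σᵢ ⟨x,e_{mᵢ}⟩e_{mᵢ}` on the space of `C⁴` functions satisfying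
the boundary conditions is bijective onto the continuous functions on `[-r,r]`. -/
theorem stmt_12 (r : ℝ) (hr : 0 < r)
    (c : ℕ → ℝ)
    (hc : ∀ k : ℕ, c k = -(π / r) ^ 2 * ((2 * (k : ℝ) - 1) / 4) ^ 2)
    (m₁ m₂ : ℕ) (hm₁ : 1 ≤ m₁) (hm₂ : 1 ≤ m₂) (hne : m₁ ≠ m₂)
    (ω₁ ω₂ : ℝ)
    (hω₁ : ω₁ = ((2 * (m₁ : ℝ) - 1) * π) / (4 * r))
    (hω₂ : ω₂ = ((2 * (m₂ : ℝ) - 1) * π) / (4 * r))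
    (e₁ e₂ : ℝ → ℝ)
    (he₁ : e₁ = fun s => 2 * Real.cos (ω₁ * (s + r)))
    (he₂ : e₂ = fun s => 2 * Real.cos (ω₂ * (s + r)))
    (α₀ β₀ : ℝ) (hα₀ : α₀ = -(c m₁ + c m₂)) (hβ₀ : β₀ = c m₁ * c m₂)
    (y : ℝ → ℝ) (hy : ContinuousOn y (Icc (-r) r)) :
    (∃ x : ℝ → ℝ, ContDiff ℝ 4 x ∧
      iteratedDeriv 1 x (-r) = 0 ∧ iteratedDeriv 3 x (-r) = 0 ∧
      x r = 0 ∧ iteratedDeriv 2 x r = 0 ∧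
      ∀ s ∈ Icc (-r) r,
        iteratedDeriv 4 x s + α₀ * iteratedDeriv 2 x s + β₀ * x s
          - ((1 / (2 * r)) * ∫ t in (-r)..r, x t * e₁ t) * e₁ s
          - ((1 / (2 * r)) * ∫ t in (-r)..r, x t * e₂ t) * e₂ s = y s) ∧
    (∀ x₁ x₂ : ℝ → ℝ, ContDiff ℝ 4 x₁ → ContDiff ℝ 4 x₂ →
      iteratedDeriv 1 x₁ (-r) = 0 → iteratedDeriv 3 x₁ (-r) = 0 →
      x₁ r = 0 → iteratedDeriv 2 x₁ r = 0 →
      iteratedDeriv 1 x₂ (-r) = 0 → iteratedDeriv 3 x₂ (-r) = 0 →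
      x₂ r = 0 → iteratedDeriv 2 x₂ r = 0 →
      (∀ s ∈ Icc (-r) r,
        iteratedDeriv 4 x₁ s + α₀ * iteratedDeriv 2 x₁ s + β₀ * x₁ s
          - ((1 / (2 * r)) * ∫ t in (-r)..r, x₁ t * e₁ t) * e₁ s
          - ((1 / (2 * r)) * ∫ t in (-r)..r, x₁ t * e₂ t) * e₂ s = y s) →
      (∀ s ∈ Icc (-r) r,
        iteratedDeriv 4 x₂ s + α₀ * iteratedDeriv 2 x₂ s + β₀ * x₂ s
          - ((1 / (2 * r)) * ∫ t in (-r)..r, x₂ t * e₁ t) * e₁ s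
          - ((1 / (2 * r)) * ∫ t in (-r)..r, x₂ t * e₂ t) * e₂ s = y s) →
      ∀ s ∈ Icc (-r) r, x₁ s = x₂ s) := by
  have hcos₁ : cos (ω₁ * (2 * r)) = 0 := hω₁ ▸ cos_odd_mul_pi_div_mul m₁ hr.ne'
  have hcos₂ : cos (ω₂ * (2 * r)) = 0 := hω₂ ▸ cos_odd_mul_pi_div_mul m₂ hr.ne'
  have hsq : ω₁ ^ 2 ≠ ω₂ ^ 2 := by rw [hω₁, hω₂]; exact sq_odd_mul_pi_div_ne hm₁ hm₂ hne hr
  have hα : α₀ = ω₁ ^ 2 + ω₂ ^ 2 := by rw [hα₀, hc, hc, hω₁, hω₂]; ring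
  have hβ : β₀ = ω₁ ^ 2 * ω₂ ^ 2 := by rw [hβ₀, hc, hc, hω₁, hω₂]; ring
  subst he₁ he₂
  refine ⟨?_, fun x₁ x₂ hx₁ hx₂ h₁ h₃ h₀ h₂ h₁' h₃' h₀' h₂' hy₁ hy₂ =>
    eqOn_of_linearizedOp_eq hr hcos₁ hcos₂ hsq hα hβ hx₁ hx₂ ⟨h₁, h₃, h₀, h₂⟩ ⟨h₁', h₃', h₀', h₂'⟩
      fun s hs => (hy₁ s hs).trans (hy₂ s hs).symm⟩
  have hrr : -r ≤ r := by linarith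
  obtain ⟨x, hx, ⟨h₁, h₃, h₀, h₂⟩, hxy⟩ := exists_linearizedOp_eq hr hcos₁ hcos₂ hsq hα hβ
    ((continuousOn_iff_continuous_domRestrict.1 hy).Icc_extend' (h := hrr))
  exact ⟨x, hx, h₁, h₃, h₀, h₂, fun s hs => (hxy s).trans (IccExtend_of_mem hrr _ hs)⟩
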